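/- arXiv:2506.19365 — 2 statements merged into one kernel-verified Lean document; each statement's English description precedes it below -/
import Mathlib

section
/- In a finite connected weighted graph with pairwise distinct edge weights, for any nonempty proper subset F of vertices, the minimum-weight edge crossing the cut (F, V \ F) belongs to the (unique) minimum spanning tree. -/
/-! Exchange argument. If `e = s(u, v)` is not in the minimum spanning tree `T`, the `T`-path from
`u` to `v` leaves `F` along some edge `f`, which crosses the cut and so is heavier than `e`.
Adding `e` to `T` closes a cycle through `f`, so removing `f` again leaves a connected graph with
as many edges as `T`, i.e. a spanning tree; it is lighter than `T`. -/

def IsSpanningTree {V : Type*} (G : SimpleGraph V) (T : Set (Sym2 V)) : Prop :=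
  T ⊆ G.edgeSet ∧ (SimpleGraph.fromEdgeSet T).Connected ∧
    (SimpleGraph.fromEdgeSet T).IsAcyclic

def IsMST {V : Type*} [Fintype V] [DecidableEq V] (G : SimpleGraph V)
    (w : Sym2 V → ℚ) (T : Finset (Sym2 V)) : Prop :=
  IsSpanningTree G (↑T : Set (Sym2 V)) ∧
    ∀ T' : Finset (Sym2 V), IsSpanningTree G (↑T' : Set (Sym2 V)) →
      ∑ e ∈ T, w e ≤ ∑ e ∈ T', w e

/-- `e` crosses the cut `(F, V \ F)`: it is an edge of `G` with exactly one
endpoint in `F`. -/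
def CrossesCut {V : Type*} (G : SimpleGraph V) (F : Set V) (e : Sym2 V) : Prop :=
  e ∈ G.edgeSet ∧ ∃ u v : V, e = s(u, v) ∧ u ∈ F ∧ v ∉ F

namespace SimpleGraph
variable {V : Type*} {H : SimpleGraph V}

theorem IsTree.sup_edge_deleteEdges [Finite V] (hH : H.IsTree) {u v : V}
    (huv : ¬H.Adj u v) (hne : u ≠ v) {p : H.Walk u v} (hp : p.IsPath) {f : Sym2 V}
    (hf : f ∈ p.edges) : ((H ⊔ edge u v).deleteEdges {f}).IsTree := by
  have hvu : (H ⊔ edge u v).Adj v u := by simp [edge_adj, hne.symm]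
  have hcycle : (Walk.cons hvu (p.mapLe le_sup_left)).IsCycle := by
    rw [Walk.cons_isCycle_iff, Walk.edges_mapLe_eq_edges, Sym2.eq_swap]
    exact ⟨hp.mapLe _, fun h => huv (p.adj_of_mem_edges h)⟩
  have hbridge : ¬(H ⊔ edge u v).IsBridge f := fun hb =>
    hb.notMem_edges_of_isCycle hcycle (by simp [hf])
  obtain ⟨x, y⟩ := f
  rw [isTree_iff_connected_and_card, Nat.card_coe_set_eq, edgeSet_deleteEdges, edgeSet_sup,
    edgeSet_edge_of_ne hne, Set.union_comm, ← Set.insert_eq,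
    Set.ncard_exchange' (show s(u, v) ∉ H.edgeSet from huv) (p.edges_subset_edgeSet hf),
    ← Nat.card_coe_set_eq]
  exact ⟨(hH.connected.mono le_sup_left).connected_delete_edge_of_not_isBridge hbridge,
    (isTree_iff_connected_and_card.mp hH).2⟩

theorem fromEdgeSet_insert_sdiff {S : Set (Sym2 V)} {u v : V} {f : Sym2 V} (hf : s(u, v) ≠ f) :
    fromEdgeSet (insert s(u, v) (S \ {f})) = (fromEdgeSet S ⊔ edge u v).deleteEdges {f} := by
  rw [edge, ← fromEdgeSet_union, deleteEdges_fromEdgeSet, Set.union_singleton,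
    Set.insert_sdiff_singleton_comm hf]

end SimpleGraph

open SimpleGraph

theorem IsSpanningTree.exchange {V : Type*} [Finite V] {G : SimpleGraph V} {T : Set (Sym2 V)}
    (hT : IsSpanningTree G T) {u v : V} (huv : s(u, v) ∈ G.edgeSet) (huvT : s(u, v) ∉ T)
    {p : (fromEdgeSet T).Walk u v} (hp : p.IsPath) {f : Sym2 V} (hf : f ∈ p.edges) :
    IsSpanningTree G (insert s(u, v) (T \ {f})) := by
  have hfT : f ∈ T := (edgeSet_fromEdgeSet T ▸ p.edges_subset_edgeSet hf).1
  have htree : (fromEdgeSet (insert s(u, v) (T \ {f}))).IsTree := by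
    rw [fromEdgeSet_insert_sdiff fun h => huvT (h ▸ hfT)]
    exact IsTree.sup_edge_deleteEdges ⟨hT.2.1, hT.2.2⟩
      (fun h => huvT ((fromEdgeSet_adj _).mp h).1) huv.ne hp hf
  exact ⟨Set.insert_subset huv (Set.sdiff_subset.trans hT.1), htree.connected, htree.isAcyclic⟩

theorem min_cut_edge_mem_mst_general {V : Type*} [Fintype V] [DecidableEq V]
    (G : SimpleGraph V)
    (w : Sym2 V → ℚ) (hw : Set.InjOn w G.edgeSet)
    (F : Set V)
    (e : Sym2 V) (he : CrossesCut G F e)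
    (hmin : ∀ e', CrossesCut G F e' → w e ≤ w e')
    (T : Finset (Sym2 V)) (hT : IsMST G w T) :
    e ∈ T := by
  by_contra heT
  obtain ⟨heG, u, v, rfl, hu, hv⟩ := he
  obtain ⟨p, hp⟩ := hT.1.2.1.exists_isPath u v
  obtain ⟨d, hd, hdu, hdv⟩ := p.exists_boundary_dart F hu hv
  have hdp : d.edge ∈ p.edges := List.mem_map_of_mem hd
  have hdT : d.edge ∈ T := (edgeSet_fromEdgeSet _ ▸ p.edges_subset_edgeSet hdp).1
  have hdG : d.edge ∈ G.edgeSet := hT.1.1 hdT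
  have hlt : w s(u, v) < w d.edge :=
    (hmin _ ⟨hdG, d.fst, d.snd, rfl, hdu, hdv⟩).lt_of_ne fun h => heT (hw heG hdG h ▸ hdT)
  have hspan : IsSpanningTree G ↑(insert s(u, v) (T.erase d.edge)) := by
    rw [Finset.coe_insert, Finset.coe_erase]
    exact hT.1.exchange heG heT hp hdp
  have hsum : ∑ x ∈ insert s(u, v) (T.erase d.edge), w x < ∑ x ∈ T, w x := by
    rw [Finset.sum_insert fun h => heT (Finset.mem_of_mem_erase h),
      ← Finset.add_sum_erase T w hdT]
    exact add_lt_add_left hlt _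
  exact (hT.2 _ hspan).not_gt hsum

/-- Cut property: with pairwise distinct edge weights, the minimum-weight
edge crossing any nonempty proper cut belongs to every (hence the unique)
minimum spanning tree. -/
theorem min_cut_edge_mem_mst {V : Type*} [Fintype V] [DecidableEq V]
    (G : SimpleGraph V) (hG : G.Connected)
    (w : Sym2 V → ℚ) (hw : Set.InjOn w G.edgeSet)
    (F : Set V) (hF : F.Nonempty) (hF' : F ≠ Set.univ)
    (e : Sym2 V) (he : CrossesCut G F e)
    (hmin : ∀ e', CrossesCut G F e' → w e ≤ w e')
    (T : Finset (Sym2 V)) (hT : IsMST G w T) :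
    e ∈ T :=
  min_cut_edge_mem_mst_general G w hw F e he hmin T hT
end

section
/- Consider the 'merge along minimum outgoing edge' operation: each fragment F (with more than one fragment present) selects the minimum-weight edge e(F) leaving F, and fragments connected by selected edges are unioned. If edge weights are pairwise distinct, then the graph on fragments whose arcs are the selections F → e(F) contains no directed cycle of length greater than 2; i.e., every cycle in the selection digraph consists of two fragments selecting the same edge. -/
/-- Selection digraph of the GHS merge step: fragments are indexed by `ι`
via the fragment map `frag : V → ι`; each fragment `i` selects its
minimum-weight outgoing edge `edge i`, which leads to the fragment `sel i`.
With injective edge weights, every cycle of the functional digraph `sel`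
has length exactly `2`, and the two fragments on it select the same edge. -/
theorem selection_digraph_cycles_have_length_two
    {V ι : Type*} (G : SimpleGraph V)
    (w : Sym2 V → ℚ) (hw : Set.InjOn w G.edgeSet)
    (frag : V → ι) (sel : ι → ι) (edge : ι → Sym2 V)
    (hedge : ∀ i : ι, edge i ∈ G.edgeSet ∧
      ∃ u v : V, edge i = s(u, v) ∧ frag u = i ∧ frag v = sel i ∧ frag v ≠ i)
    (hmin : ∀ i : ι, ∀ e' ∈ G.edgeSet,
      (∃ u v : V, e' = s(u, v) ∧ frag u = i ∧ frag v ≠ i) → w (edge i) ≤ w e') :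
    ∀ (i : ι) (k : ℕ), 0 < k → sel^[k] i = i →
      sel (sel i) = i ∧ edge (sel i) = edge i := by
  -- Step 1: sel i ≠ i for every i
  have hne : ∀ i : ι, sel i ≠ i := by
    intro i h
    obtain ⟨_, u, v, _, _, hv, hvne⟩ := hedge i
    exact hvne (hv.trans h)
  -- Step 2: edge i is an outgoing edge of fragment (sel i), so weight decreases
  have hstep : ∀ i : ι, w (edge (sel i)) ≤ w (edge i) := by
    intro i
    obtain ⟨hmem, u, v, heq, hu, hv, hvne⟩ := hedge i
    refine hmin (sel i) (edge i) hmem ⟨v, u, ?_, hv, ?_⟩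
    · rw [heq, Sym2.eq_swap]
    · rw [hu]
      exact fun h => (hne i) h.symm
  -- Step 3: along iterates, weight is nonincreasing
  have hiter : ∀ (i : ι) (k : ℕ), w (edge (sel^[k] i)) ≤ w (edge i) := by
    intro i k
    induction k with
    | zero => simp
    | succ n ih =>
      rw [Function.iterate_succ_apply']
      exact (hstep _).trans ih
  intro i k hk hcyc
  -- weights equal around the cycle
  have h1 : w (edge i) ≤ w (edge (sel i)) := by
    have := hiter (sel i) (k - 1)
    rwa [← Function.iterate_succ_apply, Nat.succ_eq_add_one,
      Nat.sub_add_cancel hk, hcyc] at this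
  have hweq : w (edge (sel i)) = w (edge i) := le_antisymm (hstep i) h1
  have hedgeeq : edge (sel i) = edge i :=
    hw (hedge (sel i)).1 (hedge i).1 hweq
  refine ⟨?_, hedgeeq⟩
  obtain ⟨_, u, v, heq, hu, hv, hvne⟩ := hedge i
  obtain ⟨_, u', v', heq', hu', hv', hvne'⟩ := hedge (sel i)
  rw [hedgeeq, heq] at heq'
  rw [Sym2.eq_iff] at heq'
  rcases heq' with ⟨h1, h2⟩ | ⟨h1, h2⟩
  · exact absurd (hu'.symm.trans (h1 ▸ hu)) (hne i)
  · rw [← hv', ← h1, hu]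
end
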